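/- For all Dyck paths P and Q of size 2k+1 having no peak of even y-coordinate and no valley of odd x-coordinate, the number traj(P,Q) of components of the meander formed by the matching of P above and the matching of Q below is odd. -/

import Mathlib

/-- A Dyck path of size `n`: a list of booleans (`true` = north step, `false` = east step)
from `(0,0)` to `(n,n)` staying weakly above the diagonal `y = x`. -/
def IsDyckPath (n : ℕ) (w : List Bool) : Prop :=
  w.length = 2 * n ∧ w.count true = n ∧
    ∀ k, (w.take k).count false ≤ (w.take k).count true

/-- The `y`-coordinate of the lattice point reached after `k` steps. -/
def ycoord (w : List Bool) (k : ℕ) : ℕ := (w.take k).count true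

/-- The `x`-coordinate of the lattice point reached after `k` steps. -/
def xcoord (w : List Bool) (k : ℕ) : ℕ := (w.take k).count false

/-- A peak: a north step at position `i` followed by an east step. -/
def IsPeak (w : List Bool) (i : ℕ) : Prop := w[i]? = some true ∧ w[i+1]? = some false

/-- A valley: an east step at position `i` followed by a north step. -/
def IsValley (w : List Bool) (i : ℕ) : Prop := w[i]? = some false ∧ w[i+1]? = some true

/-- Height above the diagonal after `k` steps. -/
def pdepth (w : List Bool) (k : ℕ) : ℤ := (ycoord w k : ℤ) - (xcoord w k : ℤ)

/-- Step `i` (a north step) of `w` is matched with step `j` (an east step):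
the facing east step at the same height (balanced-parentheses matching). -/
def Matches (w : List Bool) (i j : ℕ) : Prop :=
  i < j ∧ w[i]? = some true ∧ w[j]? = some false ∧
    pdepth w (j + 1) = pdepth w i ∧ ∀ k, i < k → k ≤ j → pdepth w i < pdepth w k

/-- The graph on `m` points whose edges are the upper arches and the lower arches;
its connected components are the components of the corresponding meander. -/
def meanderGraph (m : ℕ) (upper lower : ℕ → ℕ → Prop) : SimpleGraph (Fin m) where
  Adj i j := i ≠ j ∧ (upper i.1 j.1 ∨ upper j.1 i.1 ∨ lower i.1 j.1 ∨ lower j.1 i.1)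
  symm := by
    constructor
    intro i j h
    exact ⟨h.1.symm, by tauto⟩
  loopless := by
    constructor
    intro i h
    exact h.1 rfl

/-- The number of components of the meander with the matching of `P` above and the
matching of `Q` below. -/
noncomputable def trajPQ (n : ℕ) (P Q : List Bool) : ℕ :=
  Nat.card (meanderGraph (2 * n) (Matches P) (Matches Q)).ConnectedComponent

/-- The number of components of the meander with the matching of `P` above and the
rainbow matching `i ↦ 2n - 1 - i` below. -/
noncomputable def traj (n : ℕ) (P : List Bool) : ℕ :=
  Nat.card (meanderGraph (2 * n) (Matches P)
    (fun i j => i + j + 1 = 2 * n)).ConnectedComponent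

/-- No peak with even `y`-coordinate and no valley with odd `x`-coordinate. -/
def NoBadCorner (w : List Bool) : Prop :=
  (∀ i, IsPeak w i → Odd (ycoord w (i + 1))) ∧
  (∀ i, IsValley w i → Even (xcoord w (i + 1)))

/-- A bad corner: a peak with even `y`-coordinate or a valley with odd `x`-coordinate. -/
def IsBadCorner (w : List Bool) (i : ℕ) : Prop :=
  (IsPeak w i ∧ Even (ycoord w (i + 1))) ∨ (IsValley w i ∧ Odd (xcoord w (i + 1)))

/-- Interchange the two steps of the corner at positions `i`, `i+1`. -/
def swapCorner (w : List Bool) (i : ℕ) : List Bool :=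
  (w.set i (w.getD (i + 1) true)).set (i + 1) (w.getD i true)

open Classical in
/-- The involution `φ`: swap the two steps of the first bad corner, if any. -/
noncomputable def phiMap (w : List Bool) : List Bool :=
  if h : ∃ i, IsBadCorner w i then swapCorner w (Nat.find h) else w

/-- The number of unit squares between a Dyck path and the diagonal `y = x`. -/
def area (w : List Bool) : ℕ :=
  ((List.range w.length).map fun i =>
    if w.getD i true then 0 else ycoord w i - xcoord w i - 1).sum

/-- The zigzag Dyck path `(NE)^m`. -/
def zigzag (m : ℕ) : List Bool := (List.replicate m [true, false]).flatten

/-- `N^{2a_1} E^{2b_1} ⋯ N^{2a_t} E^{2b_t}` for `ab = [(a_1,b_1),…,(a_t,b_t)]`. -/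
def doubledWord (ab : List (ℕ × ℕ)) : List Bool :=
  (ab.map fun p => List.replicate (2 * p.1) true ++ List.replicate (2 * p.2) false).flatten

/-- `N^{a_1} E^{b_1} ⋯ N^{a_t} E^{b_t}` for `ab = [(a_1,b_1),…,(a_t,b_t)]`. -/
def halfWord (ab : List (ℕ × ℕ)) : List Bool :=
  (ab.map fun p => List.replicate p.1 true ++ List.replicate p.2 false).flatten

/-- All peaks at odd height (`height` = `y - x` at the peak's lattice point). -/
def AllPeaksOdd (w : List Bool) : Prop :=
  ∀ i, IsPeak w i → Odd (ycoord w (i + 1) - xcoord w (i + 1))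

/-- All peaks at even height. -/
def AllPeaksEven (w : List Bool) : Prop :=
  ∀ i, IsPeak w i → Even (ycoord w (i + 1) - xcoord w (i + 1))

/-- Steps of a Motzkin path: up, horizontal, down. -/
inductive MStep | U | H | D
deriving DecidableEq

/-- The total height change along a list of Motzkin steps. -/
def msum (l : List MStep) : ℤ :=
  (l.map fun s => match s with | MStep.U => 1 | MStep.H => 0 | MStep.D => -1).sum

/-- A Motzkin path of length `n`. -/
def IsMotzkin (n : ℕ) (l : List MStep) : Prop :=
  l.length = n ∧ msum l = 0 ∧ ∀ k, 0 ≤ msum (l.take k)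

/-- A Riordan path of length `n`: a Motzkin path with no horizontal step on the `x`-axis. -/
def IsRiordan (n : ℕ) (l : List MStep) : Prop :=
  IsMotzkin n l ∧ ∀ i, l[i]? = some MStep.H → msum (l.take i) ≠ 0

/-- The map `φ_A` from Dyck paths of size `n+1` (all peaks at odd height)
to Motzkin paths of length `n`: `v_j` is read off from steps `p_{2j} p_{2j+1}`. -/
def phiA (n : ℕ) (P : List Bool) : List MStep :=
  (List.range n).map fun j =>
    match P.getD (2 * j + 1) true, P.getD (2 * j + 2) true with
    | true, true => MStep.U
    | false, true => MStep.H
    | _, _ => MStep.D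

/-- The map `φ_B` from Dyck paths of size `n` (all peaks at even height)
to Riordan paths of length `n`: `u_j` is read off from steps `p_{2j-1} p_{2j}`. -/
def phiB (n : ℕ) (P : List Bool) : List MStep :=
  (List.range n).map fun j =>
    match P.getD (2 * j) true, P.getD (2 * j + 1) true with
    | true, true => MStep.U
    | false, true => MStep.H
    | _, _ => MStep.D

/-!
If a Dyck path has no bad corner, its steps at positions `2c + 1` and `2c + 2` (counted from `0`)
always agree, and its height at every odd position `m` is congruent to `m` modulo `4`. Hence the
involution `σ` of `{0, …, N - 1}` that fixes `0` and `N - 1` and swaps `2c + 1 ↔ 2c + 2` carries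
arches to arches, and so permutes the components of the meander. Every arch `(i, j)` satisfies
`⌊i / 2⌋ ≡ ⌊j / 2⌋ (mod 2)`, an invariant that `σ` changes at each point it moves. So a component
fixed by `σ` contains `0` or `N - 1`, which lie on the outer arch: exactly one component is fixed,
and the number of components is odd.
-/

open Function SimpleGraph

theorem Function.Involutive.odd_natCard_of_unique_fixedPoint {α : Type*} [Finite α] {f : α → α}
    (hf : Involutive f) {a : α} (hfix : ∀ x, f x = x ↔ x = a) : Odd (Nat.card α) := by
  classical
  have := Fintype.ofFinite α
  have hmod := Equiv.Perm.card_fixedPoints_modEq (f := f) (p := 2) (n := 1)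
    (hp := ⟨Nat.prime_two⟩) (funext hf)
  simp only [show fixedPoints f = {a} from Set.ext hfix, Set.card_singleton] at hmod
  rw [Nat.card_eq_fintype_card, Nat.odd_iff]
  exact hmod

namespace SimpleGraph

variable {V : Type*} {G : SimpleGraph V}

theorem Reachable.apply_eq_of_adj {β : Type*} {f : V → β} (hf : ∀ u v, G.Adj u v → f u = f v)
    {u v : V} (h : G.Reachable u v) : f u = f v := by
  obtain ⟨p⟩ := h
  induction p with
  | nil => rfl
  | cons hadj _ ih => exact (hf _ _ hadj).trans ih

theorem odd_natCard_connectedComponent_of_involutive [Finite V] (σ : G →g G) (hσ : Involutive σ)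
    {β : Type*} (f : V → β) (hf : ∀ u v, G.Adj u v → f u = f v)
    (hσf : ∀ v, σ v ≠ v → f (σ v) ≠ f v) {v₀ : V} (hv₀ : σ v₀ = v₀)
    (hfix : ∀ v, σ v = v → G.Reachable v v₀) :
    Odd (Nat.card G.ConnectedComponent) := by
  have hinv : Involutive (ConnectedComponent.map σ) :=
    ConnectedComponent.ind fun v => congrArg G.connectedComponentMk (hσ v)
  refine hinv.odd_natCard_of_unique_fixedPoint (a := G.connectedComponentMk v₀) fun C => ?_
  induction C using ConnectedComponent.ind with
  | h v =>
    refine ⟨fun h => ConnectedComponent.eq.2 (hfix v ?_), fun h => ?_⟩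
    · by_contra hv
      exact hσf v hv ((ConnectedComponent.eq.1 h).apply_eq_of_adj hf)
    · rw [h, ConnectedComponent.map_mk, hv₀]

end SimpleGraph

section MeanderGraph

variable {m : ℕ} {upper lower : ℕ → ℕ → Prop}

theorem meanderGraph.apply_eq_of_adj {β : Type*} {f : ℕ → β} (hu : ∀ i j, upper i j → f i = f j)
    (hl : ∀ i j, lower i j → f i = f j) {u v : Fin m}
    (h : (meanderGraph m upper lower).Adj u v) : f u = f v := by
  rcases h.2 with h | h | h | h
  exacts [hu _ _ h, (hu _ _ h).symm, hl _ _ h, (hl _ _ h).symm]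

def meanderGraph.homOfMapsTo (σ : Fin m → Fin m) (hσ : Injective σ)
    (hu : ∀ i j : Fin m, upper i j → upper (σ i) (σ j))
    (hl : ∀ i j : Fin m, lower i j → lower (σ i) (σ j)) :
    meanderGraph m upper lower →g meanderGraph m upper lower where
  toFun := σ
  map_rel' {i j} h := by
    refine ⟨hσ.ne h.1, ?_⟩
    rcases h.2 with h | h | h | h
    exacts [Or.inl (hu _ _ h), Or.inr (Or.inl (hu _ _ h)), Or.inr (Or.inr (Or.inl (hl _ _ h))),
      Or.inr (Or.inr (Or.inr (hl _ _ h)))]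

end MeanderGraph

section DyckPath

variable {n : ℕ} {w : List Bool} {i j m : ℕ}

theorem ycoord_succ {b : Bool} (h : w[i]? = some b) : ycoord w (i + 1) = ycoord w i + b.toNat := by
  cases b <;> simp [ycoord, List.take_add_one, h]

theorem xcoord_succ {b : Bool} (h : w[i]? = some b) :
    xcoord w (i + 1) = xcoord w i + (!b).toNat := by
  cases b <;> simp [xcoord, List.take_add_one, h]

theorem pdepth_zero (w : List Bool) : pdepth w 0 = 0 := by
  simp [pdepth, ycoord, xcoord]

theorem pdepth_succ_of_true (h : w[i]? = some true) : pdepth w (i + 1) = pdepth w i + 1 := by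
  simp only [pdepth, ycoord_succ h, xcoord_succ h, Bool.not_true, Bool.toNat_true,
    Bool.toNat_false]
  push_cast
  ring

theorem pdepth_succ_of_false (h : w[i]? = some false) : pdepth w (i + 1) = pdepth w i - 1 := by
  simp only [pdepth, ycoord_succ h, xcoord_succ h, Bool.not_false, Bool.toNat_true,
    Bool.toNat_false]
  push_cast
  ring

theorem ycoord_add_xcoord (hi : i ≤ w.length) : ycoord w i + xcoord w i = i := by
  simp [ycoord, xcoord, List.count_true_add_count_false, hi]

theorem two_dvd_pdepth_sub (hi : i ≤ w.length) : (2 : ℤ) ∣ pdepth w i - i := by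
  have := ycoord_add_xcoord hi
  unfold pdepth
  omega

theorem IsDyckPath.pdepth_nonneg (hw : IsDyckPath n w) (i : ℕ) : 0 ≤ pdepth w i := by
  have := hw.2.2 i
  unfold pdepth xcoord ycoord at *
  omega

theorem IsDyckPath.pdepth_length (hw : IsDyckPath n w) : pdepth w w.length = 0 := by
  have := List.count_true_add_count_false w
  have := hw.1
  have := hw.2.1
  simp only [pdepth, ycoord, xcoord, List.take_length]
  omega

theorem IsDyckPath.getElem?_zero (hw : IsDyckPath n w) (hn : 0 < w.length) :
    w[0]? = some true := by
  have := hw.2.2 1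
  cases h : w[0]'hn <;> simp_all [List.take_one, List.head?_eq_getElem?]

theorem Matches.mod_two_ne (h : Matches w i j) : i % 2 ≠ j % 2 := by
  obtain ⟨hij, hwi, hwj, heq, -⟩ := h
  have hj := (List.getElem?_eq_some_iff.1 hwj).1
  have := two_dvd_pdepth_sub (w := w) (i := i) (by omega)
  have := two_dvd_pdepth_sub (w := w) (i := j + 1) (by omega)
  omega

end DyckPath

section NoBadCorner

variable {n : ℕ} {w : List Bool} {i m : ℕ}

theorem NoBadCorner.getElem?_succ_eq_of_four_dvd (hc : NoBadCorner w) (hm : Odd m)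
    (h4 : (4 : ℤ) ∣ pdepth w m - m) (hl : m + 1 < w.length) : w[m + 1]? = w[m]? := by
  have hxy := ycoord_add_xcoord (w := w) (i := m) (by omega)
  have h1 : w[m]? = some w[m] := List.getElem?_eq_getElem (by omega)
  have h2 : w[m + 1]? = some w[m + 1] := List.getElem?_eq_getElem hl
  rw [Nat.odd_iff] at hm
  unfold pdepth at h4
  -- `y - x ≡ y + x (mod 4)` at `m` makes `x` even and `y` odd, so a corner at `m` is bad.
  cases e1 : w[m] <;> cases e2 : w[m + 1] <;> rw [e1] at h1 <;> rw [e2] at h2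
  · rw [h1, h2]
  · have := hc.2 m ⟨h1, h2⟩
    rw [xcoord_succ h1, Nat.even_iff] at this
    simp only [Bool.not_false, Bool.toNat_true] at this
    omega
  · have := hc.1 m ⟨h1, h2⟩
    rw [ycoord_succ h1, Nat.odd_iff] at this
    simp only [Bool.toNat_true] at this
    omega
  · rw [h1, h2]

theorem NoBadCorner.four_dvd_pdepth_sub (hc : NoBadCorner w) (hw : IsDyckPath n w) (hm : Odd m)
    (hl : m ≤ w.length) : (4 : ℤ) ∣ pdepth w m - m := by
  obtain ⟨a, rfl⟩ := hm
  induction a with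
  | zero =>
    rw [Nat.mul_zero, pdepth_succ_of_true (hw.getElem?_zero (by omega)), pdepth_zero]
    norm_num
  | succ a ih =>
    have ih := ih (by omega)
    have hstep := hc.getElem?_succ_eq_of_four_dvd ⟨a, rfl⟩ ih (by omega)
    obtain ⟨b, hb⟩ : ∃ b, w[2 * a + 1]? = some b :=
      ⟨_, List.getElem?_eq_getElem (by omega)⟩
    rw [hb] at hstep
    rw [show 2 * (a + 1) + 1 = 2 * a + 1 + 1 + 1 by ring]
    cases b
    · rw [pdepth_succ_of_false hstep, pdepth_succ_of_false hb]
      push_cast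
      omega
    · rw [pdepth_succ_of_true hstep, pdepth_succ_of_true hb]
      push_cast
      omega

theorem NoBadCorner.getElem?_succ_eq (hc : NoBadCorner w) (hw : IsDyckPath n w) (hm : Odd m)
    (hl : m + 1 < w.length) : w[m + 1]? = w[m]? :=
  hc.getElem?_succ_eq_of_four_dvd hm (hc.four_dvd_pdepth_sub hw hm (by omega)) hl

theorem NoBadCorner.pdepth_pos (hc : NoBadCorner w) (hw : IsDyckPath n w) (h0 : 0 < i)
    (hi : i < w.length) : 0 < pdepth w i := by
  have hnn := hw.pdepth_nonneg
  rcases Nat.even_or_odd i with he | ho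
  · obtain ⟨a, rfl⟩ : ∃ a, i = a + 1 := ⟨i - 1, by omega⟩
    have ha : Odd a := by rw [Nat.odd_iff]; rw [Nat.even_iff] at he; omega
    have hstep := hc.getElem?_succ_eq hw ha hi
    obtain ⟨b, hb⟩ : ∃ b, w[a]? = some b := ⟨_, List.getElem?_eq_getElem (by omega)⟩
    rw [hb] at hstep
    cases b
    · have := pdepth_succ_of_false hstep
      have := hnn (a + 1 + 1)
      omega
    · have := pdepth_succ_of_true hb
      have := hnn a
      omega
  · have := hc.four_dvd_pdepth_sub hw ho hi.le
    have := hnn i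
    rw [Nat.odd_iff] at ho
    omega

theorem NoBadCorner.matches_zero (hc : NoBadCorner w) (hw : IsDyckPath n w) (hl : 0 < w.length) :
    Matches w 0 (w.length - 1) := by
  have hlast : w[w.length - 1]? = some false := by
    rcases h : w[w.length - 1]'(by omega) with _ | _
    · rw [← h]
      exact List.getElem?_eq_getElem _
    · have := pdepth_succ_of_true ((List.getElem?_eq_getElem (by omega)).trans (congrArg some h))
      rw [Nat.sub_add_cancel hl, hw.pdepth_length] at this
      have := hw.pdepth_nonneg (w.length - 1)
      omega
  refine ⟨?_, hw.getElem?_zero hl, hlast, ?_, fun k hk1 hk2 => ?_⟩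
  · have := hw.1
    omega
  · rw [Nat.sub_add_cancel hl, hw.pdepth_length, pdepth_zero]
  · rw [pdepth_zero]
    exact hc.pdepth_pos hw hk1 (by omega)

end NoBadCorner

section Arches

variable {n : ℕ} {w : List Bool} {i j : ℕ}

theorem NoBadCorner.div_two_mod_two_eq_of_matches (hc : NoBadCorner w) (hw : IsDyckPath n w)
    (h : Matches w i j) : i / 2 % 2 = j / 2 % 2 := by
  have hpar := h.mod_two_ne
  obtain ⟨hij, hwi, hwj, heq, -⟩ := h
  have hj := (List.getElem?_eq_some_iff.1 hwj).1
  rcases Nat.even_or_odd i with hi | hi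
  · have hi1 := hc.four_dvd_pdepth_sub hw (m := i + 1) (by rw [Nat.odd_iff]; grind) (by omega)
    have hj1 := hc.four_dvd_pdepth_sub hw (m := j) (by rw [Nat.odd_iff]; grind) hj.le
    have := pdepth_succ_of_true hwi
    have := pdepth_succ_of_false hwj
    rw [Nat.even_iff] at hi
    omega
  · have hi1 := hc.four_dvd_pdepth_sub hw hi (hij.le.trans hj.le)
    have hj1 := hc.four_dvd_pdepth_sub hw (m := j + 1) (by rw [Nat.odd_iff]; grind) hj
    rw [Nat.odd_iff] at hi
    omega

theorem NoBadCorner.eq_zero_iff_of_matches (hc : NoBadCorner w) (hw : IsDyckPath n w)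
    (h : Matches w i j) : i = 0 ↔ j + 1 = w.length := by
  obtain ⟨hij, -, hwj, heq, -⟩ := h
  have hj := (List.getElem?_eq_some_iff.1 hwj).1
  constructor
  · rintro rfl
    by_contra hne
    have := hc.pdepth_pos hw (i := j + 1) (by omega) (by omega)
    rw [heq, pdepth_zero] at this
    exact this.false
  · intro hjl
    by_contra hne
    have := hc.pdepth_pos hw (i := i) (by omega) (by omega)
    rw [← heq, hjl, hw.pdepth_length] at this
    exact this.false

theorem NoBadCorner.matches_pred_succ (hc : NoBadCorner w) (hw : IsDyckPath n w)
    (h : Matches w i j) (hi : Even i) (hi0 : i ≠ 0) (hj : j + 1 < w.length) :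
    Matches w (i - 1) (j + 1) := by
  have hpar := h.mod_two_ne
  obtain ⟨hij, hwi, hwj, heq, hmin⟩ := h
  obtain ⟨a, rfl⟩ : ∃ a, i = a + 1 := ⟨i - 1, by omega⟩
  rw [Nat.add_sub_cancel]
  rw [Nat.even_iff] at hi
  have hwa : w[a]? = some true :=
    (hc.getElem?_succ_eq hw (Nat.odd_iff.2 (by omega)) (by omega)).symm.trans hwi
  have hwj' : w[j + 1]? = some false :=
    (hc.getElem?_succ_eq hw (Nat.odd_iff.2 (by omega)) hj).trans hwj
  have := pdepth_succ_of_true hwa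
  have := pdepth_succ_of_false hwj'
  refine ⟨by omega, hwa, hwj', by omega, fun k hk1 hk2 => ?_⟩
  rcases show k = a + 1 ∨ (a + 1 < k ∧ k ≤ j) ∨ k = j + 1 by omega with rfl | hk | rfl
  · omega
  · have := hmin k hk.1 hk.2
    omega
  · omega

theorem NoBadCorner.matches_succ_pred (hc : NoBadCorner w) (hw : IsDyckPath n w)
    (h : Matches w i j) (hi : Odd i) (hj : j + 1 < w.length) :
    Matches w (i + 1) (j - 1) := by
  have hpar := h.mod_two_ne
  obtain ⟨hij, hwi, hwj, heq, hmin⟩ := h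
  rw [Nat.odd_iff] at hi
  obtain ⟨b, rfl⟩ : ∃ b, j = b + 1 := ⟨j - 1, by omega⟩
  have hwi' : w[i + 1]? = some true :=
    (hc.getElem?_succ_eq hw (Nat.odd_iff.2 hi) (by omega)).trans hwi
  have hwb : w[b]? = some false :=
    (hc.getElem?_succ_eq hw (Nat.odd_iff.2 (by omega)) (by omega)).symm.trans hwj
  have hib : i + 1 < b := by
    by_contra
    obtain rfl : b = i := by omega
    simp_all
  have := pdepth_succ_of_true hwi
  have := pdepth_succ_of_false hwj
  simp only [Nat.add_sub_cancel]
  refine ⟨hib, hwi', hwb, by omega, fun k hk1 hk2 => ?_⟩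
  by_contra hle
  have hk := hmin k (by omega) (by omega)
  have := two_dvd_pdepth_sub (w := w) (i := k) (by omega)
  have := two_dvd_pdepth_sub (w := w) (i := i) (by omega)
  -- `k` is even, so the steps `k - 1, k` agree and `k - 1` or `k + 1` is at height `pdepth w i`.
  obtain ⟨c, rfl⟩ : ∃ c, k = c + 1 := ⟨k - 1, by omega⟩
  have hstep := hc.getElem?_succ_eq hw (m := c) (Nat.odd_iff.2 (by omega)) (by omega)
  obtain ⟨s, hs⟩ : ∃ s, w[c]? = some s := ⟨_, List.getElem?_eq_getElem (by omega)⟩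
  rw [hs] at hstep
  cases s
  · have := pdepth_succ_of_false hstep
    have := hmin (c + 1 + 1) (by omega) (by omega)
    omega
  · have := pdepth_succ_of_true hs
    have := hmin c (by omega) (by omega)
    omega

end Arches

def pairSwap (N x : ℕ) : ℕ :=
  if x = 0 ∨ x = N - 1 then x else if x % 2 = 0 then x - 1 else x + 1

section PairSwap

variable {N x : ℕ}

theorem pairSwap_lt (hx : x < N) : pairSwap N x < N := by
  unfold pairSwap
  split_ifs <;> omega

theorem pairSwap_pairSwap (hN : Even N) (hx : x < N) : pairSwap N (pairSwap N x) = x := by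
  rw [Nat.even_iff] at hN
  unfold pairSwap
  split_ifs <;> grind

theorem pairSwap_eq_self_iff : pairSwap N x = x ↔ x = 0 ∨ x = N - 1 := by
  unfold pairSwap
  split_ifs <;> omega

theorem pairSwap_zero (N : ℕ) : pairSwap N 0 = 0 :=
  pairSwap_eq_self_iff.2 (Or.inl rfl)

theorem pairSwap_div_two_mod_two_ne (h : pairSwap N x ≠ x) :
    pairSwap N x / 2 % 2 ≠ x / 2 % 2 := by
  unfold pairSwap at h ⊢
  split_ifs at h ⊢ <;> omega

theorem pairSwap_of_even (hx : Even x) (hN : x ≠ N - 1) : pairSwap N x = x - 1 := by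
  rw [Nat.even_iff] at hx
  unfold pairSwap
  split_ifs <;> omega

theorem pairSwap_of_odd (hx : Odd x) (hN : x ≠ N - 1) : pairSwap N x = x + 1 := by
  rw [Nat.odd_iff] at hx
  unfold pairSwap
  split_ifs <;> omega

end PairSwap

theorem NoBadCorner.matches_pairSwap {n : ℕ} {w : List Bool} {i j : ℕ} (hc : NoBadCorner w)
    (hw : IsDyckPath n w) (h : Matches w i j) :
    Matches w (pairSwap w.length i) (pairSwap w.length j) := by
  have hpar := h.mod_two_ne
  have hij := h.1
  have hj := (List.getElem?_eq_some_iff.1 h.2.2.1).1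
  by_cases hi0 : i = 0
  · have hjl := (hc.eq_zero_iff_of_matches hw h).1 hi0
    rwa [pairSwap_eq_self_iff.2 (Or.inl hi0), pairSwap_eq_self_iff.2 (Or.inr (by omega))]
  · have hjl : j + 1 < w.length := by
      have := (hc.eq_zero_iff_of_matches hw h).not.1 hi0
      omega
    rcases Nat.even_or_odd i with hi | hi
    · have hjo : Odd j := by rw [Nat.odd_iff]; rw [Nat.even_iff] at hi; omega
      rw [pairSwap_of_even hi (by omega), pairSwap_of_odd hjo (by omega)]
      exact hc.matches_pred_succ hw h hi hi0 hjl
    · have hje : Even j := by rw [Nat.even_iff]; rw [Nat.odd_iff] at hi; omega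
      rw [pairSwap_of_odd hi (by omega), pairSwap_of_even hje (by omega)]
      exact hc.matches_succ_pred hw h hi hjl

/-- For Dyck paths `P, Q` of size `2k+1` with no bad corner, `traj(P,Q)` is odd. -/
theorem trajPQ_odd_on_fixed_points (k : ℕ) (P Q : List Bool)
    (hP : IsDyckPath (2 * k + 1) P) (hPc : NoBadCorner P)
    (hQ : IsDyckPath (2 * k + 1) Q) (hQc : NoBadCorner Q) :
    Odd (trajPQ (2 * k + 1) P Q) := by
  set N := 2 * (2 * k + 1)
  have hPl : P.length = N := hP.1
  have hQl : Q.length = N := hQ.1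
  let σ (x : Fin N) : Fin N := ⟨pairSwap N x, pairSwap_lt x.2⟩
  have hσ : Involutive σ := fun x => Fin.ext (pairSwap_pairSwap (even_two_mul _) x.2)
  let τ := meanderGraph.homOfMapsTo σ hσ.injective
    (fun _ _ h => hPl ▸ hPc.matches_pairSwap hP h) (fun _ _ h => hQl ▸ hQc.matches_pairSwap hQ h)
  unfold trajPQ
  refine odd_natCard_connectedComponent_of_involutive τ hσ (fun v : Fin N => v.1 / 2 % 2)
    (fun _ _ => meanderGraph.apply_eq_of_adj
      (fun _ _ h => hPc.div_two_mod_two_eq_of_matches hP h)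
      (fun _ _ h => hQc.div_two_mod_two_eq_of_matches hQ h))
    (fun v hv => pairSwap_div_two_mod_two_ne fun h => hv (Fin.ext h)) (v₀ := ⟨0, by omega⟩)
    (Fin.ext (pairSwap_zero N)) fun v hv => ?_
  rcases pairSwap_eq_self_iff.1 (congrArg Fin.val hv) with h | h
  · exact (Fin.ext h : v = ⟨0, _⟩) ▸ Reachable.rfl
  · refine Adj.reachable ⟨fun he => ?_, Or.inr (Or.inl ?_)⟩
    · have := congrArg Fin.val he
      simp only at this
      omega
    · rw [h, ← hPl]
      exact hPc.matches_zero hP (by omega)
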